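/- Let ⋆ be a (semi)star operation on an integral domain D, i.e. a semistar operation with D^⋆ = D. If D is a ⋆-domain, then D is a v-domain and ⋆_f = t. -/

import Mathlib

open Submodule

namespace Semistar

/-- A semistar operation on an integral domain `D` with quotient field `K`:
a map on `D`-submodules of `K` satisfying the semistar axioms on nonzero submodules. -/
structure SemistarOp (D K : Type*) [CommRing D] [Field K] [Algebra D K] where
  star : Submodule D K → Submodule D K
  star_smul_mul : ∀ x : K, x ≠ 0 → ∀ E : Submodule D K, E ≠ ⊥ →
    star (span D {x} * E) = span D {x} * star E
  star_mono : ∀ E F : Submodule D K, E ≠ ⊥ → F ≠ ⊥ → E ≤ F → star E ≤ star F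
  le_star : ∀ E : Submodule D K, E ≠ ⊥ → E ≤ star E
  star_star : ∀ E : Submodule D K, E ≠ ⊥ → star (star E) = star E

variable {D K : Type*} [CommRing D] [Field K] [Algebra D K]

/-- The finite-type semistar operation `⋆_f` associated to `⋆`. -/
def finStar (t : Submodule D K → Submodule D K) : Submodule D K → Submodule D K :=
  fun E => ⨆ F ∈ {F : Submodule D K | F ≠ ⊥ ∧ F.FG ∧ F ≤ E}, t F

/-- The image in `K` of an ideal of `D`. -/
def idealToK (I : Ideal D) : Submodule D K :=
  Submodule.map (Algebra.linearMap D K) I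

/-- `I` is a quasi-`⋆`-ideal: a nonzero ideal of `D` with `I^⋆ ∩ D = I`. -/
def IsQuasiIdeal (t : Submodule D K → Submodule D K) (I : Ideal D) : Prop :=
  I ≠ ⊥ ∧ t (idealToK I) ⊓ 1 = idealToK I

/-- `M` is a quasi-`⋆`-maximal ideal: maximal among quasi-`⋆`-ideals. -/
def IsQuasiMaximal (t : Submodule D K → Submodule D K) (M : Ideal D) : Prop :=
  IsQuasiIdeal t M ∧ ∀ J : Ideal D, IsQuasiIdeal t J → M ≤ J → M = J

/-- The localization `E·D_M` of a submodule `E` of `K` at (the complement of) an ideal `M`. -/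
def locAt (M : Ideal D) (E : Submodule D K) : Submodule D K where
  carrier := {x : K | ∃ s ∈ Submonoid.closure ((M : Set D)ᶜ), s • x ∈ E}
  add_mem' := by
    rintro x y ⟨s, hs, hsx⟩ ⟨t, ht, hty⟩
    refine ⟨s * t, mul_mem hs ht, ?_⟩
    have h1 : (s * t) • x ∈ E := by rw [mul_comm, mul_smul]; exact E.smul_mem t hsx
    have h2 : (s * t) • y ∈ E := by rw [mul_smul]; exact E.smul_mem s hty
    rw [smul_add]; exact E.add_mem h1 h2
  zero_mem' := ⟨1, Submonoid.one_mem _, by simp⟩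
  smul_mem' := by
    rintro c x ⟨s, hs, hsx⟩
    exact ⟨s, hs, by rw [smul_comm]; exact E.smul_mem c hsx⟩

/-- The spectral semistar operation `⋆̃` associated to `⋆`, defined by
`E^⋆̃ = ⋂ { E·D_M : M quasi-`⋆_f`-maximal }`. -/
def tildeStar (s : SemistarOp D K) : Submodule D K → Submodule D K :=
  fun E => ⨅ M ∈ {M : Ideal D | IsQuasiMaximal (finStar s.star) M}, locAt M E

/-- The localizing system `F^⋆` of ideals `I` with `I^⋆ = D^⋆`. -/
def starLS (s : SemistarOp D K) : Set (Ideal D) :=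
  {I : Ideal D | I ≠ ⊥ ∧ s.star (idealToK I) = s.star 1}

/-- The stable semistar operation `⋆̄` associated to `⋆`:
`E^⋆̄ = ⋃ {(E : J) : J ∈ F^⋆}`. -/
def barStar (s : SemistarOp D K) : Submodule D K → Submodule D K :=
  fun E => ⨆ J ∈ starLS s, E / idealToK J

/-- `I` is `⋆`-invertible: `(I·I⁻¹)^⋆ = D^⋆`. -/
def IsStarInvertible (t : Submodule D K → Submodule D K) (I : Submodule D K) : Prop :=
  t (I * (1 / I)) = t 1

/-- `D` is a `⋆`-domain: every nonzero finitely generated `D`-submodule of `K`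
is `⋆`-invertible. -/
def IsStarDomain (t : Submodule D K → Submodule D K) : Prop :=
  ∀ I : Submodule D K, I ≠ ⊥ → I.FG → IsStarInvertible t I

/-- `D` is a Prüfer `⋆`-multiplication domain: every nonzero finitely generated
ideal of `D` is `⋆_f`-invertible. -/
def IsPMD (t : Submodule D K → Submodule D K) : Prop :=
  ∀ I : Submodule D K, I ≠ ⊥ → I.FG → I ≤ 1 → IsStarInvertible (finStar t) I

/-- `D` is a P⋆MD for the semistar operation `s`. -/
abbrev IsPStarMD (s : SemistarOp D K) : Prop := IsPMD s.star

/-- Equality of two semistar operations (as maps on nonzero submodules):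
`D` is a `(∗₁, ∗₂)`-domain. -/
def StarEq (t₁ t₂ : Submodule D K → Submodule D K) : Prop :=
  ∀ E : Submodule D K, E ≠ ⊥ → t₁ E = t₂ E

/-- `⋆` is a.b. -/
def IsAB (t : Submodule D K → Submodule D K) : Prop :=
  ∀ E : Submodule D K, E ≠ ⊥ → E.FG → ∀ F G : Submodule D K, F ≠ ⊥ → G ≠ ⊥ →
    t (E * F) ≤ t (E * G) → t F ≤ t G

/-- `⋆` is e.a.b. -/
def IsEAB (t : Submodule D K → Submodule D K) : Prop :=
  ∀ E F G : Submodule D K, E ≠ ⊥ → E.FG → F ≠ ⊥ → F.FG → G ≠ ⊥ → G.FG →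
    t (E * F) ≤ t (E * G) → t F ≤ t G

/-- `D` is quasi-`⋆`-integrally closed: `D^⋆ = ⋃ {(F^⋆ : F^⋆) : F ∈ f(D)}`. -/
def IsQuasiStarIntegrallyClosed (t : Submodule D K → Submodule D K) : Prop :=
  (t 1 : Set K) = ⋃ F ∈ {F : Submodule D K | F ≠ ⊥ ∧ F.FG}, ((t F / t F : Submodule D K) : Set K)

/-- The submodule `S` of `K` is integrally closed in `K`. -/
def IsIntegrallyClosedIn (S : Submodule D K) : Prop :=
  ∀ x : K, (∃ p : Polynomial K, p.Monic ∧ (∀ i, p.coeff i ∈ S) ∧ Polynomial.eval x p = 0) → x ∈ S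

/-- `D` is `⋆`-Noetherian: ACC on quasi-`⋆`-ideals. -/
def IsStarNoetherian (t : Submodule D K → Submodule D K) : Prop :=
  ∀ c : ℕ → Ideal D, (∀ n, IsQuasiIdeal t (c n)) → Monotone c →
    ∃ n, ∀ m, n ≤ m → c m = c n

/-- `D` is `⋆`-extracoherent. -/
def IsExtraCoherent (t : Submodule D K → Submodule D K) : Prop :=
  ∀ E F : Submodule D K, E ≠ ⊥ → E.FG → F ≠ ⊥ → F.FG → E ⊓ F ≠ ⊥ →
    ∃ J : Submodule D K, J ≠ ⊥ ∧ J.FG ∧ J ≤ E ⊓ F ∧ t J = t E ⊓ t F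

/-- `D` is truly `⋆`-coherent. -/
def IsTrulyCoherent (t : Submodule D K → Submodule D K) : Prop :=
  ∀ E F : Submodule D K, E ≠ ⊥ → E.FG → F ≠ ⊥ → F.FG → E ⊓ F ≠ ⊥ →
    ∃ J : Submodule D K, J ≠ ⊥ ∧ J.FG ∧ t J = t (E ⊓ F)

/-- `D` is `⋆`-coherent. -/
def IsCoherent (t : Submodule D K → Submodule D K) : Prop :=
  ∀ E F : Submodule D K, E ≠ ⊥ → E.FG → F ≠ ⊥ → F.FG → E ⊓ F ≠ ⊥ →
    ∃ J : Submodule D K, J ≠ ⊥ ∧ J.FG ∧ t J = t E ⊓ t F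

/-- `D` is `⋆`-quasi-coherent. -/
def IsQuasiCoherent (t : Submodule D K → Submodule D K) : Prop :=
  ∀ F : Submodule D K, F ≠ ⊥ → F.FG →
    ∃ G : Submodule D K, G ≠ ⊥ ∧ G.FG ∧ t ((1 : Submodule D K) / F) = t G

/-- `D` is an `H(⋆)`-domain. -/
def IsHDomain (t : Submodule D K → Submodule D K) : Prop :=
  ∀ I : Ideal D, I ≠ ⊥ → t (idealToK I) = t 1 →
    ∃ J : Ideal D, J ≠ ⊥ ∧ J.FG ∧ J ≤ I ∧ t (idealToK J) = t 1

/-- `D` is an `I(⋆)`-domain. -/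
def IsIDomain (s : SemistarOp D K) : Prop :=
  ∀ I : Submodule D K, I ≠ ⊥ → I.FG → I ≤ 1 →
    (IsStarInvertible s.star I ↔ IsStarInvertible (finStar s.star) I)

/-!
When `D^⋆ = D`, every `x ∈ (D : E)` gives `x E^⋆ = (x E)^⋆ ⊆ D^⋆ = D`, so `E^⋆ ⊆ E^v`. Conversely, if
`(I (D : I))^⋆ = D` and `x ∈ I^v`, then `x I (D : I) ⊆ I`, hence `x ∈ x (I (D : I))^⋆ ⊆ I^⋆`. Thus `⋆` and
`v` agree on `f(D)`, which gives `⋆_f = t`, and `D = (I (D : I))^⋆ ⊆ (I (D : I))^v ⊆ D^v = D` shows that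
every `I ∈ f(D)` is `v`-invertible.
-/

section Divisorial

variable {D K : Type*} [CommRing D] [Field K] [Algebra D K]

lemma span_singleton_mul_le_iff_mem_div {x : K} {E F : Submodule D K} :
    span D {x} * E ≤ F ↔ x ∈ F / E := by
  rw [← Submodule.le_div_iff_mul_le, span_singleton_le_iff_mem]

lemma span_singleton_mul_ne_bot {x : K} (hx : x ≠ 0) {E : Submodule D K} (hE : E ≠ ⊥) :
    span D {x} * E ≠ ⊥ := by
  simp [mul_eq_bot, hx, hE]

lemma one_ne_bot : (1 : Submodule D K) ≠ ⊥ :=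
  (Submodule.ne_bot_iff _).mpr ⟨1, one_le.mp le_rfl, one_ne_zero⟩

lemma one_div_one : (1 : Submodule D K) / 1 = 1 :=
  le_antisymm (fun _ hx => by simpa using hx 1 (one_le.mp le_rfl)) (one_le_one_div.mpr le_rfl)

lemma one_div_one_div_mono {E F : Submodule D K} (h : E ≤ F) : 1 / (1 / E) ≤ 1 / (1 / F) :=
  fun _ hx y hy => hx y fun z hz => hy z (h hz)

lemma one_div_ne_bot_of_fg [Nontrivial D] [IsFractionRing D K] {I : Submodule D K} (hI : I.FG) :
    (1 : Submodule D K) / I ≠ ⊥ := by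
  obtain ⟨a, ha, hint⟩ := FractionalIdeal.isFractional_of_fg (S := nonZeroDivisors D) hI
  refine (Submodule.ne_bot_iff _).mpr ⟨algebraMap D K a, fun y hy => ?_,
    IsFractionRing.to_map_ne_zero_of_mem_nonZeroDivisors ha⟩
  obtain ⟨c, hc⟩ := hint y hy
  exact mem_one.mpr ⟨c, hc.trans (Algebra.smul_def _ _)⟩

lemma finStar_congr {t₁ t₂ : Submodule D K → Submodule D K}
    (h : ∀ F : Submodule D K, F ≠ ⊥ → F.FG → t₁ F = t₂ F) : finStar t₁ = finStar t₂ :=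
  funext fun _ => biSup_congr fun F hF => h F hF.1 hF.2.1

end Divisorial

namespace SemistarOp

variable {D K : Type*} [CommRing D] [Field K] [Algebra D K] (s : SemistarOp D K)

lemma star_le_one_div_one_div (hs : s.star 1 ≤ 1) {E : Submodule D K} (hE : E ≠ ⊥) :
    s.star E ≤ 1 / (1 / E) := by
  intro y hy x hx
  rcases eq_or_ne x 0 with rfl | hx0
  · simp
  have hxE : span D {x} * s.star E ≤ 1 := by
    rw [← s.star_smul_mul x hx0 E hE]
    exact (s.star_mono _ _ (span_singleton_mul_ne_bot hx0 hE) one_ne_bot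
      (span_singleton_mul_le_iff_mem_div.mpr hx)).trans hs
  rw [mul_comm]
  exact span_singleton_mul_le_iff_mem_div.mp hxE y hy

lemma one_div_one_div_le_star {I : Submodule D K} (hI : I ≠ ⊥) (hI' : (1 : Submodule D K) / I ≠ ⊥)
    (h : IsStarInvertible s.star I) : 1 / (1 / I) ≤ s.star I := by
  intro x hx
  rcases eq_or_ne x 0 with rfl | hx0
  · exact zero_mem _
  have hII : I * (1 / I) ≠ ⊥ := by simp [mul_eq_bot, hI, hI']
  have hxII : span D {x} * (I * (1 / I)) ≤ I := calc
    span D {x} * (I * (1 / I)) = I * (span D {x} * (1 / I)) := mul_left_comm _ _ _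
    _ ≤ I * 1 := mul_le_mul_right (span_singleton_mul_le_iff_mem_div.mpr hx) I
    _ = I := mul_one I
  have hx_star : span D {x} * s.star 1 ≤ s.star I := by
    rw [← h, ← s.star_smul_mul x hx0 _ hII]
    exact s.star_mono _ _ (span_singleton_mul_ne_bot hx0 hII) hI hxII
  simpa using hx_star (mul_mem_mul (mem_span_singleton_self x)
    (s.le_star 1 one_ne_bot (one_le.mp le_rfl)))

lemma isStarInvertible_one_div_one_div (hs : s.star 1 ≤ 1) {I : Submodule D K} (hI : I ≠ ⊥)
    (hI' : (1 : Submodule D K) / I ≠ ⊥) (h : IsStarInvertible s.star I) :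
    IsStarInvertible (fun E : Submodule D K => 1 / (1 / E)) I := by
  refine le_antisymm (one_div_one_div_mono mul_one_div_le_one) ?_
  calc (1 : Submodule D K) / (1 / 1) = 1 := by rw [one_div_one, one_div_one]
    _ ≤ s.star 1 := s.le_star 1 one_ne_bot
    _ = s.star (I * (1 / I)) := h.symm
    _ ≤ 1 / (1 / (I * (1 / I))) := s.star_le_one_div_one_div hs (by simp [mul_eq_bot, hI, hI'])

end SemistarOp

theorem statement2 {D K : Type*} [CommRing D] [IsDomain D] [Field K] [Algebra D K]
    [IsFractionRing D K] (s : SemistarOp D K)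
    (hsemi : s.star 1 = 1) (h : IsStarDomain s.star) :
    IsStarDomain (fun E : Submodule D K => 1 / (1 / E)) ∧
    StarEq (finStar s.star) (finStar (fun E : Submodule D K => 1 / (1 / E))) := by
  have hfin : finStar s.star = finStar (fun E : Submodule D K => 1 / (1 / E)) :=
    finStar_congr fun F hF hfg => le_antisymm (s.star_le_one_div_one_div hsemi.le hF)
      (s.one_div_one_div_le_star hF (one_div_ne_bot_of_fg hfg) (h F hF hfg))
  exact ⟨fun I hI hfg => s.isStarInvertible_one_div_one_div hsemi.le hI
    (one_div_ne_bot_of_fg hfg) (h I hI hfg), fun E _ => congrFun hfin E⟩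

end Semistar
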